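/- Suppose the Poincaré polynomial of (G, Re) is palindrome, and let m ∈ G be the unique element with ℓ(m) = d. Let a = |Re| be the number of elements of G of length 1. Then there exists an integer n ≥ 1 dividing a! such that m^n lies in the center of G. -/

import Mathlib

/-!
Palindromicity says that `ℓ` and `d - ℓ` have fibres of equal size, so the total length is
`|G| d / 2`. Since `ℓ g + ℓ (g⁻¹ m) ≥ ℓ m = d` for every `g` and `g ↦ g⁻¹ m` is a bijection,
summing forces `ℓ g + ℓ (g⁻¹ m) = d` for all `g`. Applying this to `g` and `g⁻¹ m` shows that
conjugation by `m` preserves length, hence permutes `Re`, whose elements other than `1` are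
exactly those of length one. The `a!`-th power of this permutation is trivial, so `m ^ a!`
commutes with every generator.
-/

/-- The length of `g ∈ G` with respect to a generating set `Re`:
the smallest `n` such that `g` is a product of `n` elements of `Re`. -/
noncomputable def wordLength {G : Type*} [Group G] (Re : Set G) (g : G) : ℕ :=
  sInf {n : ℕ | ∃ l : List G, (∀ x ∈ l, x ∈ Re) ∧ l.length = n ∧ l.prod = g}

open Finset

theorem Fintype.sum_eq_sum_of_card_fiber_eq {α M : Type*} [Fintype α] [AddCommMonoid M]
    {f g : α → M} (h : ∀ b, Nat.card {a // f a = b} = Nat.card {a // g a = b}) :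
    ∑ a, f a = ∑ a, g a :=
  Fintype.sum_equiv (Equiv.ofFiberEquiv fun b => (Finite.card_eq.1 (h b)).some) _ _
    fun a => (Equiv.ofFiberEquiv_map _ a).symm

theorem two_mul_sum_eq_card_mul_of_card_fiber_symm {α : Type*} [Fintype α] {f : α → ℕ} {d : ℕ}
    (hf : ∀ a, f a ≤ d)
    (hsymm : ∀ i ≤ d, Nat.card {a // f a = i} = Nat.card {a // f a = d - i}) :
    2 * ∑ a, f a = Fintype.card α * d := by
  have hfiber : ∀ i, Nat.card {a // f a = i} = Nat.card {a // d - f a = i} := by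
    intro i
    by_cases hi : i ≤ d
    · rw [hsymm i hi]
      exact Nat.card_congr (Equiv.subtypeEquivRight fun a => by have := hf a; omega)
    · exact Nat.card_congr (Equiv.subtypeEquivRight fun a => by have := hf a; omega)
  calc 2 * ∑ a, f a = ∑ a, (f a + (d - f a)) := by
        rw [sum_add_distrib, two_mul, Fintype.sum_eq_sum_of_card_fiber_eq hfiber]
    _ = Fintype.card α * d := by simp [Nat.add_sub_cancel' (hf _)]

section wordLength

variable {G : Type*} [Group G] {Re : Set G}

theorem wordLength_le_length {g : G} {l : List G} (hl : ∀ x ∈ l, x ∈ Re) (hprod : l.prod = g) :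
    wordLength Re g ≤ l.length :=
  Nat.sInf_le ⟨l, hl, rfl, hprod⟩

theorem wordLength_le_one_of_mem {s : G} (hs : s ∈ Re) : wordLength Re s ≤ 1 :=
  wordLength_le_length (l := [s]) (by simpa using hs) List.prod_singleton

variable [Finite G]

theorem exists_list_length_eq_wordLength (hgen : Subgroup.closure Re = ⊤) (g : G) :
    ∃ l : List G, (∀ x ∈ l, x ∈ Re) ∧ l.length = wordLength Re g ∧ l.prod = g := by
  have hg : g ∈ Submonoid.closure Re := by
    rw [← Subgroup.closure_toSubmonoid_of_finite, hgen]; trivial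
  obtain ⟨l, hl, hprod⟩ := Submonoid.exists_list_of_mem_closure hg
  exact Nat.sInf_mem (s := {n | ∃ l : List G, (∀ x ∈ l, x ∈ Re) ∧ l.length = n ∧ l.prod = g})
    ⟨l.length, l, hl, rfl, hprod⟩

theorem wordLength_mul_le (hgen : Subgroup.closure Re = ⊤) (g h : G) :
    wordLength Re (g * h) ≤ wordLength Re g + wordLength Re h := by
  obtain ⟨l₁, hl₁, hlen₁, rfl⟩ := exists_list_length_eq_wordLength hgen g
  obtain ⟨l₂, hl₂, hlen₂, rfl⟩ := exists_list_length_eq_wordLength hgen h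
  rw [← hlen₁, ← hlen₂, ← List.length_append, ← List.prod_append]
  exact wordLength_le_length (fun x hx => (List.mem_append.1 hx).elim (hl₁ x) (hl₂ x)) rfl

theorem mem_iff_wordLength_le_one (hgen : Subgroup.closure Re = ⊤) {g : G} (hg : g ≠ 1) :
    g ∈ Re ↔ wordLength Re g ≤ 1 := by
  refine ⟨wordLength_le_one_of_mem, fun h => ?_⟩
  obtain ⟨l, hl, hlen, rfl⟩ := exists_list_length_eq_wordLength hgen g
  rcases l with _ | ⟨x, _ | ⟨y, l⟩⟩
  · exact absurd List.prod_nil hg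
  · simpa using hl
  · simp only [List.length_cons] at hlen; omega

theorem mem_normalizer_of_wordLength_conj (hgen : Subgroup.closure Re = ⊤) {m : G}
    (h : ∀ g, wordLength Re (m⁻¹ * g * m) = wordLength Re g) :
    m ∈ Subgroup.normalizer Re := by
  refine Subgroup.mem_set_normalizer_iff''.2 fun g => ?_
  rcases eq_or_ne g 1 with rfl | hg
  · simp
  · have hconj : m⁻¹ * g * m ≠ 1 := by simpa [mul_assoc, inv_mul_eq_one] using hg
    rw [mem_iff_wordLength_le_one hgen hg, mem_iff_wordLength_le_one hgen hconj, h]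

theorem wordLength_add_wordLength_inv_mul (hgen : Subgroup.closure Re = ⊤) {d : ℕ}
    (hub : ∀ g : G, wordLength Re g ≤ d)
    (hpal : ∀ i ≤ d, Nat.card {g : G // wordLength Re g = i}
      = Nat.card {g : G // wordLength Re g = d - i})
    {m : G} (hm : wordLength Re m = d) (g : G) :
    wordLength Re g + wordLength Re (g⁻¹ * m) = d := by
  have := Fintype.ofFinite G
  have hle : ∀ x ∈ (univ : Finset G), d ≤ wordLength Re x + wordLength Re (x⁻¹ * m) := by
    intro x _
    simpa [hm] using wordLength_mul_le hgen x (x⁻¹ * m)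
  have hreindex : ∑ x : G, wordLength Re (x⁻¹ * m) = ∑ x : G, wordLength Re x :=
    Fintype.sum_equiv ((Equiv.inv G).trans (Equiv.mulRight m)) _ _ fun _ => rfl
  have hsum : ∑ _x : G, d = ∑ x : G, (wordLength Re x + wordLength Re (x⁻¹ * m)) := by
    rw [sum_add_distrib, hreindex, ← two_mul, two_mul_sum_eq_card_mul_of_card_fiber_symm hub hpal]
    simp
  exact ((sum_eq_sum_iff_of_le hle).1 hsum g (mem_univ g)).symm

end wordLength

theorem pow_factorial_card_mem_center_of_mem_normalizer {G : Type*} [Group G] {S : Set G}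
    [Finite S] (hS : Subgroup.closure S = ⊤) {m : G} (hm : m ∈ Subgroup.normalizer S) :
    m ^ (Nat.card S).factorial ∈ Subgroup.center G := by
  have hconj : ∀ g, MulAut.toPerm G (MulAut.conj m) g ∈ S ↔ g ∈ S := fun g =>
    (Subgroup.mem_set_normalizer_iff.1 hm g).symm
  have hσ : (MulAut.toPerm G (MulAut.conj m)).subtypePerm hconj ^ (Nat.card S).factorial = 1 := by
    rw [← Nat.card_perm]; exact pow_card_eq_one'
  rw [Equiv.Perm.subtypePerm_pow] at hσ
  rw [← Subgroup.centralizer_univ, ← Subgroup.coe_top, ← hS, Subgroup.centralizer_closure]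
  intro s hs
  have hfix := congrArg (fun τ : Equiv.Perm S => (τ ⟨s, hs⟩ : G)) hσ
  simp only [Equiv.Perm.subtypePerm_apply, ← map_pow] at hfix
  exact (mul_inv_eq_iff_eq_mul.1 hfix).symm

theorem pow_max_length_central_of_palindrome_general
    {G : Type*} [Group G] [Finite G] (Re : Set G)
    (hgen : Subgroup.closure Re = ⊤)
    (d : ℕ) (hub : ∀ g : G, wordLength Re g ≤ d)
    (hpal : ∀ i ≤ d, Nat.card {g : G // wordLength Re g = i}
      = Nat.card {g : G // wordLength Re g = d - i})
    (m : G) (hm : wordLength Re m = d) :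
    ∃ n : ℕ, 1 ≤ n ∧ n ∣ Nat.factorial (Nat.card Re) ∧
      m ^ n ∈ Subgroup.center G := by
  have hsplit := wordLength_add_wordLength_inv_mul hgen hub hpal hm
  have hconj : ∀ g, wordLength Re (m⁻¹ * g * m) = wordLength Re g := fun g => by
    have h := hsplit (g⁻¹ * m)
    rw [show (g⁻¹ * m)⁻¹ * m = m⁻¹ * g * m by group] at h
    have := hsplit g
    omega
  exact ⟨_, Nat.factorial_pos _, dvd_rfl,
    pow_factorial_card_mem_center_of_mem_normalizer hgen
      (mem_normalizer_of_wordLength_conj hgen hconj)⟩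

/-- If the Poincaré polynomial of `(G, Re)` is palindrome and `m` is the unique
element of maximal length `d`, and `a = |Re|`, then `m ^ n` is central for some
`n ≥ 1` dividing `a!`. -/
theorem pow_max_length_central_of_palindrome
    {G : Type*} [Group G] [Finite G] (Re : Set G)
    (hgen : Subgroup.closure Re = ⊤) (hne : (1 : G) ∉ Re)
    (d : ℕ) (hub : ∀ g : G, wordLength Re g ≤ d) (hex : ∃ g : G, wordLength Re g = d)
    (hpal : ∀ i ≤ d, Nat.card {g : G // wordLength Re g = i}
      = Nat.card {g : G // wordLength Re g = d - i})
    (m : G) (hm : wordLength Re m = d)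
    (hmu : ∀ g : G, wordLength Re g = d → g = m) :
    ∃ n : ℕ, 1 ≤ n ∧ n ∣ Nat.factorial (Nat.card Re) ∧
      m ^ n ∈ Subgroup.center G :=
  pow_max_length_central_of_palindrome_general Re hgen d hub hpal m hm
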